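/- For every finite graph G with max(α_M(G), ω_M(G)) ≥ 2, G admits a prime extension adding at most ⌈log₂(max(α_M(G), ω_M(G)) + 1)⌉ new vertices; that is, p(G) ≤ ⌈log₂(max(α_M(G), ω_M(G)) + 1)⌉. -/

import Mathlib

/-- `M` is a module of `G`: every vertex outside `M` is adjacent to all of `M` or to none. -/
def SimpleGraph.IsModule {V : Type*} (G : SimpleGraph V) (M : Set V) : Prop :=
  ∀ v ∉ M, (∀ m ∈ M, G.Adj v m) ∨ (∀ m ∈ M, ¬ G.Adj v m)

/-- `G` is prime: at least 4 vertices and all modules are trivial. -/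
def SimpleGraph.IsPrimeGraph {V : Type*} [Fintype V] (G : SimpleGraph V) : Prop :=
  4 ≤ Fintype.card V ∧
    ∀ M : Set V, G.IsModule M → M = ∅ ∨ (∃ v, M = {v}) ∨ M = Set.univ

/-- `H` on `V ⊕ W` is an extension of `G` on `V`: it induces `G` on the `inl` copy of `V`. -/
def SimpleGraph.IsExtension {V W : Type*} (G : SimpleGraph V) (H : SimpleGraph (V ⊕ W)) : Prop :=
  ∀ u v : V, H.Adj (Sum.inl u) (Sum.inl v) ↔ G.Adj u v

/-- The prime bound of `G`: the least `p` such that `G` has a prime `p`-extension. -/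
noncomputable def SimpleGraph.primeBound {V : Type*} [Fintype V] (G : SimpleGraph V) : ℕ :=
  sInf {p : ℕ | ∃ H : SimpleGraph (V ⊕ Fin p), G.IsExtension H ∧ H.IsPrimeGraph}

/-- The modular clique number: largest size of a module of `G` that is a clique. -/
noncomputable def SimpleGraph.modularCliqueNumber {V : Type*} [Fintype V]
    (G : SimpleGraph V) : ℕ :=
  sSup {n : ℕ | ∃ M : Set V, G.IsModule M ∧ G.IsClique M ∧ M.ncard = n}

/-- The modular stability number: `ω_M` of the complement. -/
noncomputable def SimpleGraph.modularStabilityNumber {V : Type*} [Fintype V]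
    (G : SimpleGraph V) : ℕ :=
  Gᶜ.modularCliqueNumber

/-- The number of isolated vertices of `G`. -/
noncomputable def SimpleGraph.isolatedCount {V : Type*} [Fintype V] (G : SimpleGraph V) : ℕ :=
  {v : V | ∀ w, ¬ G.Adj v w}.ncard

/-- `P` is a modular partition of `G`. -/
def SimpleGraph.IsModularPartition {V : Type*} (G : SimpleGraph V) (P : Set (Set V)) : Prop :=
  (∀ X ∈ P, X.Nonempty) ∧ ⋃₀ P = Set.univ ∧ P.Pairwise Disjoint ∧ ∀ X ∈ P, G.IsModule X

/-- The quotient graph `G/P` of a (modular) partition `P`. -/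
def SimpleGraph.quotientGraph {V : Type*} (G : SimpleGraph V) (P : Set (Set V)) :
    SimpleGraph P where
  Adj X Y := (X : Set V) ≠ (Y : Set V) ∧ ∃ u ∈ (X : Set V), ∃ v ∈ (Y : Set V), G.Adj u v
  symm := by
    constructor
    rintro X Y ⟨hne, u, hu, v, hv, h⟩
    exact ⟨fun h' => hne h'.symm, v, hv, u, hu, h.symm⟩
  loopless := by
    constructor
    rintro X ⟨hne, -⟩
    exact hne rfl

/-- `M` is a strong module of `G`. -/
def SimpleGraph.IsStrongModule {V : Type*} (G : SimpleGraph V) (M : Set V) : Prop :=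
  G.IsModule M ∧ ∀ N : Set V, G.IsModule N → (M ∩ N).Nonempty → M ⊆ N ∨ N ⊆ M

/-!
Write `m = max (α_M G) (ω_M G)` and `k = ⌈log₂ (m + 1)⌉`; up to complementation `G` has a clique
module `C` with `m` vertices. By induction on the number of vertices, splitting along the
components of `G` or of `Gᶜ`, or along the maximal proper modules when both are connected, `G` has
an `m`-coloring in which no module with two vertices is monochromatic; it is injective on `C`.
Recode the colors as distinct subsets of `k` new independent vertices so that every singleton
occurs (hence on `C`) and one of `∅`, `univ` never occurs, and join each old vertex to its subset.
A nontrivial module of this extension cannot consist of old vertices only (the coloring), of new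
vertices only (the singletons), or contain some but not all new vertices (the clique module `C`);
so it contains every new vertex, and then every old vertex, because the missing color `∅` or `univ`
rules out an isolated or universal old vertex.
-/

namespace SimpleGraph

open Set

variable {V W α ι : Type*} {G : SimpleGraph V} {M N : Set V}

def IsAdjClosed (G : SimpleGraph V) (M : Set V) : Prop :=
  ∀ ⦃a b⦄, G.Adj a b → a ∈ M → b ∈ M

/-- `max (α_M G) (ω_M G) ≤ s`, phrased without the suprema. -/
def HomogeneousModulesCardLE (G : SimpleGraph V) (s : ℕ) : Prop :=
  ∀ N, G.IsModule N → G.IsClique N ∨ Gᶜ.IsClique N → N.ncard ≤ s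

def NoMonochromaticModule (G : SimpleGraph V) (c : V → α) : Prop :=
  ∀ N, G.IsModule N → N.Nontrivial → ∃ u ∈ N, ∃ w ∈ N, c u ≠ c w

namespace IsModule

theorem adj_iff (hM : G.IsModule M) {x y z : V} (hx : x ∉ M) (hy : y ∈ M) (hz : z ∈ M) :
    G.Adj x y ↔ G.Adj x z := by
  rcases hM x hx with h | h
  · exact iff_of_true (h y hy) (h z hz)
  · exact iff_of_false (h y hy) (h z hz)

theorem compl (hM : G.IsModule M) : Gᶜ.IsModule M := by
  intro v hv
  rcases hM v hv with h | h
  · exact Or.inr fun m hm hc => hc.2 (h m hm)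
  · exact Or.inl fun m hm => ⟨fun hvm => hv (hvm ▸ hm), h m hm⟩

theorem union (hM : G.IsModule M) (hN : G.IsModule N) (hMN : (M ∩ N).Nonempty) :
    G.IsModule (M ∪ N) := by
  obtain ⟨w, hwM, hwN⟩ := hMN
  intro x hx
  simp only [mem_union, not_or] at hx
  rcases hM x hx.1 with h | h
  · exact Or.inl fun y hy => hy.elim (h y) fun hy => (hN.adj_iff hx.2 hwN hy).1 (h w hwM)
  · exact Or.inr fun y hy => hy.elim (h y) fun hy hxy => h w hwM ((hN.adj_iff hx.2 hwN hy).2 hxy)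

theorem diff (hM : G.IsModule M) (hN : G.IsModule N) (hMN : (M \ N).Nonempty) :
    G.IsModule (N \ M) := by
  obtain ⟨x₀, hx₀M, hx₀N⟩ := hMN
  intro x hx
  by_cases hxN : x ∈ N
  · have hxM : x ∈ M := by_contra fun hxM => hx ⟨hxN, hxM⟩
    -- `x` and `x₀` look alike from `N \ M`, and `x₀ ∉ N` is uniform on `N`.
    have key : ∀ y ∈ N \ M, G.Adj x y ↔ G.Adj x₀ y := fun y hy => by
      rw [G.adj_comm x, G.adj_comm x₀]; exact hM.adj_iff hy.2 hxM hx₀M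
    rcases hN x₀ hx₀N with h | h
    · exact Or.inl fun y hy => (key y hy).2 (h y hy.1)
    · exact Or.inr fun y hy hxy => h y hy.1 ((key y hy).1 hxy)
  · rcases hN x hxN with h | h
    · exact Or.inl fun y hy => h y hy.1
    · exact Or.inr fun y hy => h y hy.1

theorem comap (f : W → V) (hM : G.IsModule M) : (G.comap f).IsModule (f ⁻¹' M) := by
  intro v hv
  rcases hM (f v) hv with h | h
  · exact Or.inl fun m hm => h (f m) hm
  · exact Or.inr fun m hm => h (f m) hm

theorem image_val {N : Set M} (hM : G.IsModule M) (hN : (G.induce M).IsModule N) :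
    G.IsModule (Subtype.val '' N) := by
  rintro x hx
  by_cases hxM : x ∈ M
  · have hxN : (⟨x, hxM⟩ : M) ∉ N := fun h => hx ⟨_, h, rfl⟩
    rcases hN _ hxN with h | h
    · exact Or.inl (by rintro _ ⟨m, hm, rfl⟩; exact h m hm)
    · exact Or.inr (by rintro _ ⟨m, hm, rfl⟩; exact h m hm)
  · rcases hM x hxM with h | h
    · exact Or.inl (by rintro _ ⟨m, -, rfl⟩; exact h m m.2)
    · exact Or.inr (by rintro _ ⟨m, -, rfl⟩; exact h m m.2)

theorem of_subset_isClique (hM : G.IsModule M) (hMc : G.IsClique M) (hNM : N ⊆ M) :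
    G.IsModule N := by
  intro x hx
  by_cases hxM : x ∈ M
  · exact Or.inl fun m hm => hMc hxM (hNM hm) fun h => hx (h ▸ hm)
  · rcases hM x hxM with h | h
    · exact Or.inl fun m hm => h m (hNM hm)
    · exact Or.inr fun m hm => h m (hNM hm)

theorem isAdjClosed_or_of_compl (hM : G.IsModule M) (hMc : G.IsModule Mᶜ) :
    G.IsAdjClosed M ∨ Gᶜ.IsAdjClosed M := by
  by_cases h : ∃ a ∈ M, ∃ b ∉ M, G.Adj a b
  · obtain ⟨a₀, ha₀, b₀, hb₀, hab₀⟩ := h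
    refine Or.inr fun a b hab ha => by_contra fun hb => hab.2 ?_
    have hab₀' : G.Adj a b₀ := (G.adj_comm _ _).1 ((hM.adj_iff hb₀ ha₀ ha).1 hab₀.symm)
    exact (hMc.adj_iff (not_not.2 ha) hb₀ hb).1 hab₀'
  · push Not at h
    exact Or.inl fun a b hab ha => by_contra fun hb => h a ha b hb hab

end IsModule

theorem isModule_univ : G.IsModule univ := fun _ hx => absurd (mem_univ _) hx

theorem isModule_compl_iff : Gᶜ.IsModule M ↔ G.IsModule M :=
  ⟨fun h => by simpa using h.compl, IsModule.compl⟩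

namespace IsAdjClosed

theorem compl (hM : G.IsAdjClosed M) : G.IsAdjClosed Mᶜ :=
  fun _ _ hab ha hb => ha (hM hab.symm hb)

theorem isModule (hM : G.IsAdjClosed M) : G.IsModule M :=
  fun _ hv => Or.inr fun _ hm hvm => hv (hM hvm.symm hm)

theorem nontrivial_inter_or (hM : G.IsAdjClosed M) (hout : ∀ v ∉ M, ∃ w, G.Adj v w)
    (hN : G.IsModule N) (hNt : N.Nontrivial) : (N ∩ M).Nontrivial ∨ (N ∩ Mᶜ).Nontrivial := by
  by_cases hNM : N ⊆ M
  · exact Or.inl (by rwa [inter_eq_self_of_subset_left hNM])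
  obtain ⟨b, hbN, hbM⟩ := not_subset.1 hNM
  obtain ⟨y, hby⟩ := hout b hbM
  have hyM : y ∉ M := fun hyM => hbM (hM hby.symm hyM)
  refine Or.inr ?_
  by_cases hyN : y ∈ N
  · exact ⟨b, ⟨hbN, hbM⟩, y, ⟨hyN, hyM⟩, hby.ne⟩
  · have hNMc : N ⊆ Mᶜ := fun x hx hxM =>
      hyM (hM ((hN.adj_iff hyN hbN hx).1 hby.symm).symm hxM)
    rwa [inter_eq_self_of_subset_left hNMc]

end IsAdjClosed

theorem HomogeneousModulesCardLE.compl {s : ℕ} (hb : G.HomogeneousModulesCardLE s) :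
    Gᶜ.HomogeneousModulesCardLE s := fun N hN hNc =>
  hb N (isModule_compl_iff.1 hN) (by rwa [compl_compl, or_comm] at hNc)

theorem HomogeneousModulesCardLE.induce {s : ℕ} (hb : G.HomogeneousModulesCardLE s)
    (hM : G.IsModule M) : (G.induce M).HomogeneousModulesCardLE s := by
  intro N hN hNc
  have hinj : InjOn Subtype.val N := Subtype.val_injective.injOn
  rw [← hinj.ncard_image]
  refine hb _ (hM.image_val hN) ?_
  rcases hNc with hNc | hNc
  · exact Or.inl (hinj.pairwise_image.2 hNc)
  · refine Or.inr (hinj.pairwise_image.2 fun x hx y hy hxy => ?_)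
    exact ⟨Subtype.val_injective.ne hxy, (hNc hx hy hxy).2⟩

theorem noMonochromaticModule_compl_iff {c : V → α} :
    Gᶜ.NoMonochromaticModule c ↔ G.NoMonochromaticModule c :=
  ⟨fun hc N hN => hc N hN.compl, fun hc N hN => hc N (isModule_compl_iff.1 hN)⟩

namespace NoMonochromaticModule

variable {c : V → α}

theorem comp {β : Type*} {f : α → β} (hc : G.NoMonochromaticModule c) (hf : Function.Injective f) :
    G.NoMonochromaticModule (f ∘ c) := fun N hN hNt => by
  obtain ⟨u, hu, w, hw, huw⟩ := hc N hN hNt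
  exact ⟨u, hu, w, hw, hf.ne huw⟩

theorem of_injective (hc : Function.Injective c) : G.NoMonochromaticModule c :=
  fun _ _ ⟨u, hu, w, hw, huw⟩ => ⟨u, hu, w, hw, hc.ne huw⟩

theorem subsingleton_of_forall_eq (hc : G.NoMonochromaticModule c) (hN : G.IsModule N) {a : α}
    (h : ∀ x ∈ N, c x = a) : N.Subsingleton := fun x hx y hy => by
  by_contra hxy
  obtain ⟨u, hu, w, hw, huw⟩ := hc N hN ⟨x, hx, y, hy, hxy⟩
  exact huw ((h u hu).trans (h w hw).symm)

theorem injOn_of_isClique (hc : G.NoMonochromaticModule c) {C : Set V} (hC : G.IsModule C)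
    (hCc : G.IsClique C) : InjOn c C := by
  intro x hx y hy hxy
  exact hc.subsingleton_of_forall_eq (hC.of_subset_isClique hCc (pair_subset hx hy))
    (a := c x) (by rintro z (rfl | rfl) <;> simp [hxy]) (by simp) (by simp)

theorem exists_ne_of_nontrivial_inter (hc : (G.induce M).NoMonochromaticModule (c ∘ (↑)))
    (hN : G.IsModule N) (hNM : (N ∩ M).Nontrivial) : ∃ u ∈ N, ∃ w ∈ N, c u ≠ c w := by
  obtain ⟨x, hx, y, hy, hxy⟩ := hNM
  obtain ⟨u, hu, w, hw, huw⟩ := hc _ (hN.comap _) ⟨⟨x, hx.2⟩, hx.1, ⟨y, hy.2⟩, hy.1,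
    fun h => hxy (congrArg Subtype.val h)⟩
  exact ⟨u, hu, w, hw, huw⟩

end NoMonochromaticModule

theorem _root_.Set.PairwiseDisjoint.exists_comp_val_eq [Nonempty α] {P : Set (Set V)}
    (hP : P.PairwiseDisjoint id) (f : ∀ M ∈ P, M → α) :
    ∃ c : V → α, ∀ M (hM : M ∈ P), c ∘ (↑) = f M hM := by
  classical
  refine ⟨fun v => if h : ∃ M ∈ P, v ∈ M then f _ h.choose_spec.1 ⟨v, h.choose_spec.2⟩
    else Classical.arbitrary α, fun M hM => funext fun ⟨v, hv⟩ => ?_⟩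
  have key : ∀ M' (hM' : M' ∈ P) (hv' : v ∈ M'), f M' hM' ⟨v, hv'⟩ = f M hM ⟨v, hv⟩ := by
    intro M' hM' hv'
    obtain rfl := hP.elim hM' hM (not_disjoint_iff.2 ⟨v, hv', hv⟩)
    rfl
  simp only [Function.comp_apply, dif_pos (⟨M, hM, hv⟩ : ∃ M ∈ P, v ∈ M)]
  exact key _ _ _

theorem exists_noMonochromaticModule_of_cover [Nonempty α] {P : Set (Set V)}
    (hP : P.PairwiseDisjoint id)
    (hcol : ∀ M ∈ P, ∃ c : M → α, (G.induce M).NoMonochromaticModule c)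
    (hcover : ∀ N, G.IsModule N → N.Nontrivial → ∃ M ∈ P, (N ∩ M).Nontrivial) :
    ∃ c : V → α, G.NoMonochromaticModule c := by
  choose f hf using hcol
  obtain ⟨c, hc⟩ := hP.exists_comp_val_eq f
  refine ⟨c, fun N hN hNt => ?_⟩
  obtain ⟨M, hMP, hNM⟩ := hcover N hN hNt
  exact (hc M hMP ▸ hf M hMP).exists_ne_of_nontrivial_inter hN hNM

theorem pairwiseDisjoint_maximal_isModule
    (hconn : ∀ M : Set V, M.Nonempty → M ≠ univ → ¬G.IsAdjClosed M ∧ ¬Gᶜ.IsAdjClosed M) :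
    {M | Maximal (fun M : Set V => G.IsModule M ∧ M ≠ univ) M}.PairwiseDisjoint id := by
  intro M₁ h₁ M₂ h₂ hne
  rw [mem_ofPred_eq] at h₁ h₂
  by_contra hnd
  obtain ⟨v, hv₁, hv₂⟩ := not_disjoint_iff.1 hnd
  have hU := h₁.prop.1.union h₂.prop.1 ⟨v, hv₁, hv₂⟩
  by_cases hUu : M₁ ∪ M₂ = univ
  · have h12 : (M₁ \ M₂).Nonempty := by
      by_contra h
      rw [not_nonempty_iff_eq_empty, sdiff_eq_empty] at h
      exact hne (h₁.eq_of_le h₂.prop h)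
    have hc : M₂ \ M₁ = M₁ᶜ := by
      ext x
      have := hUu ▸ mem_univ x
      simp only [mem_sdiff, mem_compl_iff, mem_union] at this ⊢
      tauto
    have hconn₁ := hconn M₁ ⟨v, hv₁⟩ h₁.prop.2
    rcases h₁.prop.1.isAdjClosed_or_of_compl (hc ▸ h₁.prop.1.diff h₂.prop.1 h12) with h | h
    exacts [hconn₁.1 h, hconn₁.2 h]
  · exact hne ((h₁.eq_of_le ⟨hU, hUu⟩ subset_union_left).trans
      (h₂.eq_of_le ⟨hU, hUu⟩ subset_union_right).symm)

section Coloring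

variable (hsub : ∀ M, G.IsModule M → M ≠ univ → ∃ c : M → α, (G.induce M).NoMonochromaticModule c)
include hsub

theorem exists_noMonochromaticModule_of_isAdjClosed [Nonempty α]
    (hM : G.IsAdjClosed M) (hMne : M.Nonempty) (hMu : M ≠ univ) (hout : ∀ v ∉ M, ∃ w, G.Adj v w) :
    ∃ c : V → α, G.NoMonochromaticModule c := by
  refine exists_noMonochromaticModule_of_cover (P := {M, Mᶜ})
    (pairwise_pair.2 fun _ => ⟨disjoint_compl_right, disjoint_compl_left⟩) ?_ fun N hN hNt => ?_
  · rintro _ (rfl | rfl)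
    exacts [hsub _ hM.isModule hMu, hsub _ hM.compl.isModule (compl_ne_univ.2 hMne)]
  · rcases hM.nontrivial_inter_or hout hN hNt with h | h
    exacts [⟨M, by simp, h⟩, ⟨Mᶜ, by simp, h⟩]

theorem exists_noMonochromaticModule_of_ne_bot [Nonempty α] (hG : G ≠ ⊥)
    (hM : G.IsAdjClosed M) (hMne : M.Nonempty) (hMu : M ≠ univ) :
    ∃ c : V → α, G.NoMonochromaticModule c := by
  set I := {v | ∀ w, ¬G.Adj v w}
  have hout : ∀ v ∉ I, ∃ w, G.Adj v w := fun v hv => by simpa [I] using hv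
  by_cases hI : I.Nonempty
  · obtain ⟨u, v, huv⟩ := ne_bot_iff_exists_adj.1 hG
    exact exists_noMonochromaticModule_of_isAdjClosed hsub (fun a b hab ha => (ha b hab).elim) hI
      (ne_univ_iff_exists_notMem _ |>.2 ⟨u, fun hu => hu v huv⟩) hout
  · rw [not_nonempty_iff_eq_empty] at hI
    exact exists_noMonochromaticModule_of_isAdjClosed hsub hM hMne hMu
      fun v _ => hout v (hI ▸ notMem_empty v)

theorem exists_noMonochromaticModule_of_connected [Finite V] [Nonempty α]
    (hconn : ∀ M : Set V, M.Nonempty → M ≠ univ → ¬G.IsAdjClosed M ∧ ¬Gᶜ.IsAdjClosed M)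
    (hmod : ∃ M, G.IsModule M ∧ M ≠ univ ∧ M.Nontrivial) :
    ∃ c : V → α, G.NoMonochromaticModule c := by
  refine exists_noMonochromaticModule_of_cover (pairwiseDisjoint_maximal_isModule hconn)
    (fun M hM => hsub M hM.1.1 hM.1.2) fun N hN hNt => ?_
  by_cases hNu : N = univ
  · obtain ⟨M₀, hM₀, hM₀u, hM₀t⟩ := hmod
    obtain ⟨M, hM₀M, hM⟩ := Finite.exists_le_maximal (p := fun M : Set V => G.IsModule M ∧ M ≠ univ)
      ⟨hM₀, hM₀u⟩
    exact ⟨M, hM, by rw [hNu, univ_inter]; exact hM₀t.mono hM₀M⟩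
  · obtain ⟨M, hNM, hM⟩ := Finite.exists_le_maximal (p := fun M : Set V => G.IsModule M ∧ M ≠ univ)
      ⟨hN, hNu⟩
    exact ⟨M, hM, by rwa [inter_eq_self_of_subset_left hNM]⟩

end Coloring

theorem exists_noMonochromaticModule_of_forall_eq_univ {a b : α} (hab : a ≠ b) (v₀ : V)
    (h : ∀ N, G.IsModule N → N.Nontrivial → N = univ) :
    ∃ c : V → α, G.NoMonochromaticModule c := by
  classical
  refine ⟨fun v => if v = v₀ then a else b, fun N hN hNt => ?_⟩
  obtain ⟨w, hw, hwv⟩ := hNt.exists_ne v₀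
  exact ⟨v₀, h N hN hNt ▸ mem_univ v₀, w, hw, by simp [hwv, hab]⟩

variable (G) in
theorem exists_noMonochromaticModule_fin [Finite V] {s : ℕ} (hs : 2 ≤ s)
    (hb : G.HomogeneousModulesCardLE s) :
    ∃ c : V → Fin s, G.NoMonochromaticModule c := by
  induction hn : Nat.card V using Nat.strong_induction_on generalizing V with
  | _ n ih =>
  have : Nonempty (Fin s) := ⟨⟨0, by omega⟩⟩
  have hsub (H : SimpleGraph V) (hbH : H.HomogeneousModulesCardLE s) (M : Set V)
      (hM : H.IsModule M) (hMu : M ≠ univ) :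
      ∃ c : M → Fin s, (H.induce M).NoMonochromaticModule c := by
    obtain ⟨x, hx⟩ := (ne_univ_iff_exists_notMem M).1 hMu
    exact ih _ (hn ▸ Finite.card_subtype_lt hx) (H.induce M) (hbH.induce hM) rfl
  by_cases hhom : G.IsClique univ ∨ Gᶜ.IsClique univ
  · have hcard : Nat.card V ≤ s := by
      simpa [ncard_univ] using hb univ isModule_univ hhom
    exact ⟨fun v => Fin.castLE hcard (Finite.equivFin V v),
      .of_injective ((Fin.castLE_injective hcard).comp (Finite.equivFin V).injective)⟩
  rw [isClique_univ, isClique_univ, compl_eq_top, not_or] at hhom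
  obtain ⟨hGtop, hGbot⟩ := hhom
  by_cases hdis : ∃ M : Set V, M.Nonempty ∧ M ≠ univ ∧ G.IsAdjClosed M
  · obtain ⟨M, hMne, hMu, hM⟩ := hdis
    exact exists_noMonochromaticModule_of_ne_bot (hsub G hb) hGbot hM hMne hMu
  by_cases hdisc : ∃ M : Set V, M.Nonempty ∧ M ≠ univ ∧ Gᶜ.IsAdjClosed M
  · obtain ⟨M, hMne, hMu, hM⟩ := hdisc
    obtain ⟨c, hc⟩ := exists_noMonochromaticModule_of_ne_bot (hsub Gᶜ hb.compl)
      (by rwa [Ne, compl_eq_bot]) hM hMne hMu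
    exact ⟨c, noMonochromaticModule_compl_iff.1 hc⟩
  by_cases hmod : ∃ M, G.IsModule M ∧ M ≠ univ ∧ M.Nontrivial
  · exact exists_noMonochromaticModule_of_connected (hsub G hb)
      (fun M h₁ h₂ => ⟨fun h => hdis ⟨M, h₁, h₂, h⟩, fun h => hdisc ⟨M, h₁, h₂, h⟩⟩) hmod
  · obtain ⟨v₀, -, -⟩ := ne_bot_iff_exists_adj.1 hGbot
    exact exists_noMonochromaticModule_of_forall_eq_univ (a := (⟨0, by omega⟩ : Fin s))
      (b := ⟨1, by omega⟩) (by simp) v₀ fun N hN hNt => by_contra fun hNu => hmod ⟨N, hN, hNu, hNt⟩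

theorem NoMonochromaticModule.eq_univ_of_forall_notMem {c : V → α}
    (hc : G.NoMonochromaticModule c) {A : Set V} {a : α}
    (h : ∀ x ∉ A, c x = a ∧ ∀ y ∈ A, G.Adj x y) (hnu : ∀ x, c x = a → ∃ w ≠ x, ¬G.Adj x w) :
    A = univ := by
  by_contra hAu
  obtain ⟨b, hb⟩ := (ne_univ_iff_exists_notMem A).1 hAu
  have hmod : G.IsModule Aᶜ := fun y hy => Or.inl fun x hx => ((h x hx).2 y (not_not.1 hy)).symm
  have hsub := hc.subsingleton_of_forall_eq hmod fun x hx => (h x hx).1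
  obtain ⟨w, hwb, hbw⟩ := hnu b (h b hb).1
  exact hbw ((h b hb).2 w (by_contra fun hw => hwb (hsub hw hb)))

theorem IsExtension.isModule_preimage_inl {H : SimpleGraph (V ⊕ ι)} (hH : G.IsExtension H)
    {M : Set (V ⊕ ι)} (hM : H.IsModule M) : G.IsModule (Sum.inl ⁻¹' M) := by
  intro v hv
  rcases hM (.inl v) hv with h | h
  · exact Or.inl fun m hm => (hH v m).1 (h _ hm)
  · exact Or.inr fun m hm hvm => h _ hm ((hH v m).2 hvm)

def colorExtension (G : SimpleGraph V) (c : V → Set ι) : SimpleGraph (V ⊕ ι) where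
  Adj
    | .inl u, .inl v => G.Adj u v
    | .inl u, .inr i => i ∈ c u
    | .inr i, .inl u => i ∈ c u
    | .inr _, .inr _ => False
  symm := ⟨by rintro (u | i) (v | j) h <;> first | exact h.symm | exact h⟩
  loopless := ⟨by rintro (u | i) h; exacts [G.loopless.irrefl u h, h]⟩

section colorExtension

variable {c : V → Set ι}

@[simp] theorem colorExtension_adj_inl_inl {u v : V} :
    (G.colorExtension c).Adj (.inl u) (.inl v) ↔ G.Adj u v := Iff.rfl

@[simp] theorem colorExtension_adj_inl_inr {u : V} {i : ι} :
    (G.colorExtension c).Adj (.inl u) (.inr i) ↔ i ∈ c u := Iff.rfl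

@[simp] theorem colorExtension_adj_inr_inl {u : V} {i : ι} :
    (G.colorExtension c).Adj (.inr i) (.inl u) ↔ i ∈ c u := Iff.rfl

@[simp] theorem colorExtension_adj_inr_inr {i j : ι} :
    ¬(G.colorExtension c).Adj (.inr i) (.inr j) := id

theorem isExtension_colorExtension : G.IsExtension (G.colorExtension c) := fun _ _ => Iff.rfl

variable {M : Set (V ⊕ ι)} (hM : (G.colorExtension c).IsModule M)
include hM

theorem nonempty_preimage_inr (hc : G.NoMonochromaticModule c)
    (hA : (Sum.inl ⁻¹' M).Nontrivial) : (Sum.inr ⁻¹' M).Nonempty := by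
  by_contra hS
  obtain ⟨a₀, ha₀⟩ := hA.nonempty
  have hconst : ∀ a ∈ Sum.inl ⁻¹' M, c a = c a₀ := fun a ha => by
    ext i
    simpa using hM.adj_iff (fun hi => hS ⟨i, hi⟩) ha ha₀
  exact hA.not_subsingleton
    (hc.subsingleton_of_forall_eq (isExtension_colorExtension.isModule_preimage_inl hM) hconst)

theorem nonempty_preimage_inl (hsing : ∀ i, ∃ r, c r = {i}) (hS : (Sum.inr ⁻¹' M).Nontrivial) :
    (Sum.inl ⁻¹' M).Nonempty := by
  by_contra hA
  obtain ⟨i, hi, j, hj, hij⟩ := hS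
  obtain ⟨r, hr⟩ := hsing i
  have := hM.adj_iff (fun hr => hA ⟨r, hr⟩) hi hj
  simp only [colorExtension_adj_inl_inr, hr, mem_singleton_iff, true_iff] at this
  exact hij this.symm

/-- If `.inr j ∉ M` and `.inr i₀ ∈ M`, a vertex of `C` colored `{j}` sees nothing of `M` and one
colored `{i₀}` sees all of it; as `C` is a clique and a module, no old vertex can lie in `M`. -/
theorem preimage_inr_eq_univ {C : Set V} (hC : G.IsModule C) (hCc : G.IsClique C)
    (hsing : ∀ i, ∃ r ∈ C, c r = {i}) (hA : (Sum.inl ⁻¹' M).Nonempty)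
    (hS : (Sum.inr ⁻¹' M).Nonempty) : Sum.inr ⁻¹' M = univ := by
  by_contra hSu
  obtain ⟨j, hj⟩ := (ne_univ_iff_exists_notMem _).1 hSu
  obtain ⟨i₀, hi₀⟩ := hS
  obtain ⟨a₀, ha₀⟩ := hA
  obtain ⟨rj, hrjC, hrj⟩ := hsing j
  have hrjM : .inl rj ∉ M := fun h => by
    simpa [hrj] using hM.adj_iff (y := .inr i₀) hj hi₀ h
  have hrj_nadj : ∀ a ∈ Sum.inl ⁻¹' M, ¬G.Adj rj a := fun a ha h => by
    have := hM.adj_iff hrjM ha hi₀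
    simp only [colorExtension_adj_inl_inl, colorExtension_adj_inl_inr, hrj,
      mem_singleton_iff] at this
    exact hj (this.1 h ▸ hi₀)
  by_cases hAC : ∃ a ∈ Sum.inl ⁻¹' M, a ∈ C
  · obtain ⟨a, haM, haC⟩ := hAC
    exact hrj_nadj a haM (hCc hrjC haC fun h => hrjM (h ▸ haM))
  · obtain ⟨ri, hriC, hri⟩ := hsing i₀
    have hriM : .inl ri ∉ M := fun h => hAC ⟨ri, h, hriC⟩
    have hri_adj : G.Adj ri a₀ := (hM.adj_iff hriM hi₀ ha₀).1 (by simp [hri])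
    have ha₀C : a₀ ∉ C := fun h => hAC ⟨a₀, ha₀, h⟩
    exact hrj_nadj a₀ ha₀ ((hC.adj_iff ha₀C hriC hrjC).1 hri_adj.symm).symm

theorem preimage_inl_eq_univ (hc : G.NoMonochromaticModule c)
    (hE : (∀ v, c v ≠ ∅ ∧ ∃ w ≠ v, ¬G.Adj v w) ∨ (∀ v, c v ≠ univ ∧ ∃ w, G.Adj v w))
    (hS : Sum.inr ⁻¹' M = univ) [Nonempty ι] : Sum.inl ⁻¹' M = univ := by
  obtain ⟨i₀⟩ := ‹Nonempty ι›
  have hi₀ : .inr i₀ ∈ M := eq_univ_iff_forall.1 hS i₀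
  have hout : ∀ x ∉ Sum.inl ⁻¹' M, c x = univ ∧ (∀ a ∈ Sum.inl ⁻¹' M, G.Adj x a) ∨
      c x = ∅ ∧ ∀ a ∈ Sum.inl ⁻¹' M, ¬G.Adj x a := fun x hx => by
    have hi (i : ι) : i ∈ c x ↔ i₀ ∈ c x := by
      simpa using hM.adj_iff hx (eq_univ_iff_forall.1 hS i) hi₀
    have ha (a : V) (ha : .inl a ∈ M) : G.Adj x a ↔ i₀ ∈ c x := by
      simpa using hM.adj_iff hx ha hi₀
    by_cases h : i₀ ∈ c x
    · exact Or.inl ⟨eq_univ_of_forall fun i => (hi i).2 h, fun a h' => (ha a h').2 h⟩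
    · exact Or.inr ⟨eq_empty_of_forall_notMem fun i h' => h ((hi i).1 h'),
        fun a h' => mt (ha a h').1 h⟩
  rcases hE with hE | hE
  · refine hc.eq_univ_of_forall_notMem (a := univ) (fun x hx => ?_) fun x _ => (hE x).2
    exact (hout x hx).resolve_right fun h => (hE x).1 h.1
  · refine (noMonochromaticModule_compl_iff.2 hc).eq_univ_of_forall_notMem (a := ∅)
      (fun x hx => ?_) fun x _ => ?_
    · obtain ⟨hxe, hxA⟩ := (hout x hx).resolve_left fun h => (hE x).1 h.1
      exact ⟨hxe, fun y hy => ⟨fun h => hx (h ▸ hy), hxA y hy⟩⟩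
    · obtain ⟨w, hw⟩ := (hE x).2
      exact ⟨w, hw.ne.symm, fun h => h.2 hw⟩

end colorExtension

theorem isPrimeGraph_colorExtension [Fintype V] [Fintype ι] {c : V → Set ι}
    (hcard : 4 ≤ Fintype.card V + Fintype.card ι) (hc : G.NoMonochromaticModule c)
    {C : Set V} (hC : G.IsModule C) (hCc : G.IsClique C) (hsing : ∀ i, ∃ r ∈ C, c r = {i})
    (hE : (∀ v, c v ≠ ∅ ∧ ∃ w ≠ v, ¬G.Adj v w) ∨ (∀ v, c v ≠ univ ∧ ∃ w, G.Adj v w)) :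
    (G.colorExtension c).IsPrimeGraph := by
  refine ⟨by rwa [Fintype.card_sum], fun M hM => ?_⟩
  by_cases hMt : M.Nontrivial
  swap
  · exact (not_nontrivial_iff.1 hMt).eq_empty_or_singleton.imp_right Or.inl
  refine Or.inr (Or.inr ?_)
  have hAS : (Sum.inl ⁻¹' M).Nonempty ∧ (Sum.inr ⁻¹' M).Nonempty := by
    obtain ⟨x, hx, y, hy, hxy⟩ := hMt
    rcases x with a | i <;> rcases y with b | j
    · have hA : (Sum.inl ⁻¹' M).Nontrivial := ⟨a, hx, b, hy, fun h => hxy (h ▸ rfl)⟩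
      exact ⟨hA.nonempty, nonempty_preimage_inr hM hc hA⟩
    · exact ⟨⟨a, hx⟩, ⟨j, hy⟩⟩
    · exact ⟨⟨b, hy⟩, ⟨i, hx⟩⟩
    · have hS : (Sum.inr ⁻¹' M).Nontrivial := ⟨i, hx, j, hy, fun h => hxy (h ▸ rfl)⟩
      exact ⟨nonempty_preimage_inl hM (fun i => (hsing i).imp fun _ => And.right) hS, hS.nonempty⟩
  have hS := preimage_inr_eq_univ hM hC hCc hsing hAS.1 hAS.2
  have : Nonempty ι := hAS.2.to_subtype.map Subtype.val
  have hA := preimage_inl_eq_univ hM hc hE hS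
  refine eq_univ_of_forall ?_
  rintro (v | i)
  exacts [eq_univ_iff_forall.1 hA v, eq_univ_iff_forall.1 hS i]

theorem IsExtension.compl {H : SimpleGraph (V ⊕ W)} (hH : G.IsExtension H) :
    Gᶜ.IsExtension Hᶜ := fun u v => by simp [hH u v]

theorem IsPrimeGraph.compl [Fintype V] (hG : G.IsPrimeGraph) : Gᶜ.IsPrimeGraph :=
  ⟨hG.1, fun M hM => hG.2 M (isModule_compl_iff.1 hM)⟩

section ModularCliqueNumber

variable [Fintype V]

theorem bddAbove_ncard_isModule_isClique :
    BddAbove {n | ∃ M : Set V, G.IsModule M ∧ G.IsClique M ∧ M.ncard = n} :=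
  ⟨Nat.card V, by rintro _ ⟨M, -, -, rfl⟩; exact ncard_le_card M⟩

theorem ncard_le_modularCliqueNumber {N : Set V} (hN : G.IsModule N) (hNc : G.IsClique N) :
    N.ncard ≤ G.modularCliqueNumber := by
  unfold modularCliqueNumber
  exact le_csSup bddAbove_ncard_isModule_isClique ⟨N, hN, hNc, rfl⟩

theorem exists_isModule_isClique_ncard_eq_modularCliqueNumber :
    ∃ C : Set V, G.IsModule C ∧ G.IsClique C ∧ C.ncard = G.modularCliqueNumber := by
  unfold modularCliqueNumber
  exact Nat.sSup_mem (s := {n | ∃ M : Set V, G.IsModule M ∧ G.IsClique M ∧ M.ncard = n})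
    ⟨0, ∅, fun _ _ => Or.inr fun _ h => h.elim, isClique_empty, ncard_empty V⟩
    bddAbove_ncard_isModule_isClique

theorem homogeneousModulesCardLE_max :
    G.HomogeneousModulesCardLE (max G.modularStabilityNumber G.modularCliqueNumber) := by
  rintro N hN (hNc | hNc)
  · exact (ncard_le_modularCliqueNumber hN hNc).trans (le_max_right _ _)
  · exact (ncard_le_modularCliqueNumber (G := Gᶜ) hN.compl hNc).trans (le_max_left _ _)

end ModularCliqueNumber

theorem exists_embedding_set_singletons [Fintype ι] {E₀ : Set ι} (hE₀ : ∀ i, {i} ≠ E₀) {m : ℕ}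
    (hιm : Fintype.card ι ≤ m) (hm : m < 2 ^ Fintype.card ι) :
    ∃ f : Fin m ↪ Set ι, (∀ j, f j ≠ E₀) ∧ ∀ i, ∃ j, f j = {i} := by
  classical
  obtain ⟨u, hsu, hut, hu⟩ := Finset.exists_subsuperset_card_eq
    (s := Finset.univ.image fun i : ι => ({i} : Set ι)) (t := Finset.univ.erase E₀)
    (by simpa [Finset.subset_iff] using hE₀) (Finset.card_image_le.trans (by simpa using hιm))
    (by rw [Finset.card_erase_of_mem (Finset.mem_univ _), Finset.card_univ, Fintype.card_set]
        omega)
  let e := Finset.equivFinOfCardEq hu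
  refine ⟨e.symm.toEmbedding.trans (Function.Embedding.subtype _),
    fun j => Finset.ne_of_mem_erase (hut (e.symm j).2), fun i => ⟨e ⟨{i}, hsu (by simp)⟩, by simp⟩⟩

theorem clog_two_add_one_bounds {m : ℕ} (hm : 2 ≤ m) :
    2 ≤ Nat.clog 2 (m + 1) ∧ Nat.clog 2 (m + 1) ≤ m ∧ m < 2 ^ Nat.clog 2 (m + 1) := by
  set k := Nat.clog 2 (m + 1)
  have hmk : m < 2 ^ k := Nat.le_pow_clog one_lt_two _
  have hkm : 2 ^ (k - 1) < m + 1 := Nat.pow_pred_clog_lt_self one_lt_two (by omega)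
  have hk : 2 ≤ k := by
    by_contra hk
    have : 2 ^ k ≤ 2 ^ 1 := Nat.pow_le_pow_right (by norm_num) (by omega)
    omega
  have : k - 1 < 2 ^ (k - 1) := Nat.lt_two_pow_self
  exact ⟨hk, by omega, hmk⟩

open Classical in
def excludedColor (G : SimpleGraph V) (ι : Type*) : Set ι :=
  if ∃ v, ∀ w, ¬G.Adj v w then ∅ else univ

theorem singleton_ne_excludedColor [Nontrivial ι] (i : ι) : {i} ≠ G.excludedColor ι := by
  unfold excludedColor
  split_ifs
  exacts [singleton_ne_empty i, singleton_ne_univ i]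

theorem forall_ne_empty_or_forall_ne_univ [Nontrivial V] {c : V → Set ι}
    (hc : ∀ v, c v ≠ G.excludedColor ι) :
    (∀ v, c v ≠ ∅ ∧ ∃ w ≠ v, ¬G.Adj v w) ∨ (∀ v, c v ≠ univ ∧ ∃ w, G.Adj v w) := by
  unfold excludedColor at hc
  by_cases hI : ∃ v, ∀ w, ¬G.Adj v w
  · simp only [if_pos hI] at hc
    obtain ⟨i, hi⟩ := hI
    refine Or.inl fun v => ⟨hc v, ?_⟩
    obtain rfl | hvi := eq_or_ne v i
    · obtain ⟨w, hw⟩ := exists_ne v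
      exact ⟨w, hw, hi w⟩
    · exact ⟨i, hvi.symm, fun h => hi v h.symm⟩
  · simp only [if_neg hI] at hc
    push Not at hI
    exact Or.inr fun v => ⟨hc v, hI v⟩

theorem exists_isPrimeGraph_extension [Fintype V] {m : ℕ} (hm : 2 ≤ m)
    (hb : G.HomogeneousModulesCardLE m) {C : Set V} (hC : G.IsModule C) (hCc : G.IsClique C)
    (hCm : C.ncard = m) :
    ∃ H : SimpleGraph (V ⊕ Fin (Nat.clog 2 (m + 1))), G.IsExtension H ∧ H.IsPrimeGraph := by
  set k := Nat.clog 2 (m + 1)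
  obtain ⟨hk, hkm, hmk⟩ := clog_two_add_one_bounds hm
  have hmV : m ≤ Fintype.card V := hCm ▸ Nat.card_eq_fintype_card (α := V) ▸ ncard_le_card C
  have : Nontrivial V := Fintype.one_lt_card_iff_nontrivial.1 (by omega)
  have : Nontrivial (Fin k) := Fin.nontrivial_iff_two_le.2 hk
  obtain ⟨φ, hφ⟩ := exists_noMonochromaticModule_fin G hm hb
  have hφC : φ '' C = univ := eq_of_subset_of_ncard_le (subset_univ _) (by
    rw [ncard_univ, Nat.card_fin, (hφ.injOn_of_isClique hC hCc).ncard_image, hCm])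
  obtain ⟨f, hfE, hfsing⟩ := exists_embedding_set_singletons (ι := Fin k) (m := m)
    (singleton_ne_excludedColor (G := G)) (by simpa using hkm) (by simpa using hmk)
  refine ⟨G.colorExtension (f ∘ φ), isExtension_colorExtension,
    isPrimeGraph_colorExtension (by simp; omega) (hφ.comp f.injective) hC hCc (fun i => ?_)
      (forall_ne_empty_or_forall_ne_univ fun v => hfE (φ v))⟩
  obtain ⟨j, hj⟩ := hfsing i
  obtain ⟨r, hr, rfl⟩ := hφC ▸ mem_univ j
  exact ⟨r, hr, hj⟩

end SimpleGraph

/-- upper bound `p(G) ≤ ⌈log₂(max(α_M(G), ω_M(G)) + 1)⌉`. -/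
theorem primeBound_upper_bound {V : Type*} [Fintype V] (G : SimpleGraph V)
    (h : 2 ≤ max G.modularStabilityNumber G.modularCliqueNumber) :
    G.primeBound ≤ Nat.clog 2 (max G.modularStabilityNumber G.modularCliqueNumber + 1) := by
  set m := max G.modularStabilityNumber G.modularCliqueNumber
  suffices ∃ H : SimpleGraph (V ⊕ Fin (Nat.clog 2 (m + 1))), G.IsExtension H ∧ H.IsPrimeGraph from
    Nat.sInf_le this
  have hb : G.HomogeneousModulesCardLE m := SimpleGraph.homogeneousModulesCardLE_max
  rcases max_choice G.modularStabilityNumber G.modularCliqueNumber with hα | hω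
  · obtain ⟨C, hC, hCc, hCm⟩ := Gᶜ.exists_isModule_isClique_ncard_eq_modularCliqueNumber
    obtain ⟨H, hH, hHp⟩ :=
      SimpleGraph.exists_isPrimeGraph_extension h hb.compl hC hCc (hCm.trans hα.symm)
    exact ⟨Hᶜ, by simpa using hH.compl, hHp.compl⟩
  · obtain ⟨C, hC, hCc, hCm⟩ := G.exists_isModule_isClique_ncard_eq_modularCliqueNumber
    exact SimpleGraph.exists_isPrimeGraph_extension h hb hC hCc (hCm.trans hω.symm)
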